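/- Sharpness of the constant 3 in Zygmund's inequality: there exist a sequence (λ_n) of positive integers and a sequence of functions u_n(x) := Σ_{m ∈ S_{λ_n}} a^{(n)}_m e^{2πi m·x} with complex coefficients supported in S_{λ_n} := {m ∈ ℤ² : |m|² = λ_n}, such that Σ_{m ∈ S_{λ_n}} |a^{(n)}_m|² = 1 for every n and ∫_{[0,1]²} |u_n(x)|⁴ dx → 3 as n → ∞. -/

import Mathlib

open MeasureTheory Real Filter

noncomputable section

open Finset Complex
open scoped Combinatorics.Additive ComplexConjugate

/-!
Orthogonality of the characters `e(m·x)` on `[0,1]²` turns `∫ |∑_{m ∈ S} e(m·x)|⁴` into the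
additive energy `E(S)`, the number of solutions of `m₁ + m₂ = m₃ + m₄` in `S`. On a circle
`S = S_λ` a nonzero sum `s = m₁ + m₂` determines `{m₁, m₂}`: in `ℤ[i]` both points are roots of
`z² - s z + λ s / s̄`. The sum `0` is attained by `N = #S_λ` pairs, so `E(S_λ) = 3N² - 3N` and the
flat coefficients `N^{-1/2}` give `∫ |u|⁴ = 3 - 3/N`. Along `λ = 5ⁿ` the norm-`5ⁿ` Gaussian
integers `(2+i)ᵃ(2-i)ᵇ`, `a + b = n`, are pairwise distinct, so `N ≥ n + 1 → ∞`.
-/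

def torusChar (m : ℤ × ℤ) (x : ℝ × ℝ) : ℂ :=
  exp (2 * π * I * ((m.1 : ℂ) * (x.1 : ℂ) + (m.2 : ℂ) * (x.2 : ℂ)))

lemma torusChar_add (m m' : ℤ × ℤ) (x : ℝ × ℝ) :
    torusChar (m + m') x = torusChar m x * torusChar m' x := by
  rw [torusChar, torusChar, torusChar, ← Complex.exp_add, Prod.fst_add, Prod.snd_add]
  congr 1
  push_cast
  ring

lemma conj_torusChar (m : ℤ × ℤ) (x : ℝ × ℝ) : conj (torusChar m x) = torusChar (-m) x := by
  rw [torusChar, torusChar, ← exp_conj]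
  simp only [map_mul, map_add, conj_ofReal, conj_I, map_ofNat, map_intCast, Prod.fst_neg,
    Prod.snd_neg, Int.cast_neg]
  congr 1
  ring

lemma continuous_torusChar (m : ℤ × ℤ) : Continuous (torusChar m) := by
  unfold torusChar
  fun_prop

lemma setIntegral_Icc_exp_two_pi_I_int_mul (k : ℤ) :
    ∫ t in Set.Icc (0 : ℝ) 1, exp (2 * π * I * (k * t)) = if k = 0 then 1 else 0 := by
  rw [integral_Icc_eq_integral_Ioc, ← intervalIntegral.integral_of_le zero_le_one]
  split_ifs with hk
  · simp [hk]
  · have hc : 2 * π * I * k ≠ 0 := by simp [pi_ne_zero, hk]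
    simp_rw [← mul_assoc]
    rw [integral_exp_mul_complex hc]
    have hexp : exp (2 * π * I * k) = 1 := by
      rw [show 2 * π * I * k = k * (2 * π * I) by ring]
      exact exp_int_mul_two_pi_mul_I k
    simp [hexp]

lemma setIntegral_unitSquare_torusChar (m : ℤ × ℤ) :
    ∫ x in Set.Icc (0 : ℝ) 1 ×ˢ Set.Icc (0 : ℝ) 1, torusChar m x = if m = 0 then 1 else 0 := by
  have hsplit : torusChar m = fun x : ℝ × ℝ =>
      exp (2 * π * I * (m.1 * x.1)) * exp (2 * π * I * (m.2 * x.2)) := by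
    ext x
    rw [torusChar, ← Complex.exp_add]
    congr 1
    ring
  rw [hsplit, Measure.volume_eq_prod,
    setIntegral_prod_mul (fun t : ℝ => exp (2 * π * I * (m.1 * t)))
      (fun t : ℝ => exp (2 * π * I * (m.2 * t))),
    setIntegral_Icc_exp_two_pi_I_int_mul, setIntegral_Icc_exp_two_pi_I_int_mul]
  obtain ⟨m₁, m₂⟩ := m
  by_cases h₁ : m₁ = 0 <;> by_cases h₂ : m₂ = 0 <;> simp [h₁, h₂]

lemma setIntegral_unitSquare_norm_sq_sum_torusChar {ι : Type*} [DecidableEq ι] (s : Finset ι)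
    (f : ι → ℤ × ℤ) :
    ∫ x in Set.Icc (0 : ℝ) 1 ×ˢ Set.Icc (0 : ℝ) 1, ‖∑ i ∈ s, torusChar (f i) x‖ ^ 2
      = #{ij ∈ s ×ˢ s | f ij.1 = f ij.2} := by
  have hexpand : ∀ x, ((‖∑ i ∈ s, torusChar (f i) x‖ ^ 2 : ℝ) : ℂ)
      = ∑ ij ∈ s ×ˢ s, torusChar (f ij.1 - f ij.2) x := by
    intro x
    rw [ofReal_pow, ← mul_conj', map_sum, sum_mul_sum, sum_product]
    simp_rw [conj_torusChar, sub_eq_add_neg, torusChar_add]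
  apply ofReal_injective
  rw [← integral_complex_ofReal]
  simp_rw [hexpand]
  rw [integral_finsetSum _ fun ij _ => (continuous_torusChar _).continuousOn.integrableOn_compact
    (isCompact_Icc.prod isCompact_Icc)]
  simp_rw [setIntegral_unitSquare_torusChar, sub_eq_zero]
  rw [sum_boole]
  norm_cast

lemma setIntegral_unitSquare_norm_pow_four_sum_torusChar (S : Finset (ℤ × ℤ)) :
    ∫ x in Set.Icc (0 : ℝ) 1 ×ˢ Set.Icc (0 : ℝ) 1, ‖∑ m ∈ S, torusChar m x‖ ^ 4 = E[S] := by
  have hsq : ∀ x, ‖∑ m ∈ S, torusChar m x‖ ^ 4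
      = ‖∑ mm ∈ S ×ˢ S, torusChar (mm.1 + mm.2) x‖ ^ 2 := by
    intro x
    simp_rw [torusChar_add, sum_product, ← mul_sum, ← sum_mul, ← sq, norm_pow, ← pow_mul]
  simp_rw [hsq]
  rw [setIntegral_unitSquare_norm_sq_sum_torusChar, addEnergy_eq_card_filter]

lemma eq_and_eq_or_eq_and_eq_of_add_eq_add_of_mul_star_self_eq {R : Type*} [CommRing R]
    [IsDomain R] [StarRing R] {r z₁ z₂ z₃ z₄ : R} (h₁ : z₁ * star z₁ = r)
    (h₂ : z₂ * star z₂ = r) (h₃ : z₃ * star z₃ = r) (h₄ : z₄ * star z₄ = r)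
    (hsum : z₁ + z₂ = z₃ + z₄) (hsum₀ : z₁ + z₂ ≠ 0) :
    z₃ = z₁ ∧ z₄ = z₂ ∨ z₃ = z₂ ∧ z₄ = z₁ := by
  -- On the circle `conj z = r / z`, so the sum `s` of two points determines their product.
  have hprod : ∀ {a b : R}, a * star a = r → b * star b = r →
      a * b * star (a + b) = r * (a + b) := by
    intro a b ha hb
    rw [star_add]
    linear_combination b * ha + a * hb
  have hmul : z₁ * z₂ = z₃ * z₄ := by
    refine mul_right_cancel₀ (star_ne_zero.mpr hsum₀) ?_
    rw [hprod h₁ h₂, hsum, ← hprod h₃ h₄]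
  have hroot : (z₃ - z₁) * (z₃ - z₂) = 0 := by
    linear_combination (-z₃) * hsum + hmul
  rcases mul_eq_zero.mp hroot with h | h
  · exact .inl ⟨by linear_combination h, by linear_combination -h - hsum⟩
  · exact .inr ⟨by linear_combination h, by linear_combination -h - hsum⟩

def latticeCircle (n : ℕ) : Finset (ℤ × ℤ) :=
  {m ∈ Icc (-(n : ℤ)) n ×ˢ Icc (-(n : ℤ)) n | m.1 ^ 2 + m.2 ^ 2 = n}

lemma mem_latticeCircle {n : ℕ} {m : ℤ × ℤ} : m ∈ latticeCircle n ↔ m.1 ^ 2 + m.2 ^ 2 = n := by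
  simp only [latticeCircle, mem_filter, mem_product, mem_Icc, and_iff_right_iff_imp]
  intro h
  refine ⟨⟨?_, ?_⟩, ?_, ?_⟩ <;>
    nlinarith [Int.le_self_sq m.1, Int.le_self_sq m.2, Int.le_self_sq (-m.1), Int.le_self_sq (-m.2)]

lemma neg_mem_latticeCircle {n : ℕ} {m : ℤ × ℤ} : -m ∈ latticeCircle n ↔ m ∈ latticeCircle n := by
  simp [mem_latticeCircle]

lemma zero_notMem_latticeCircle {n : ℕ} (hn : 0 < n) : (0 : ℤ × ℤ) ∉ latticeCircle n := by
  simpa [mem_latticeCircle, eq_comm] using hn.ne'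

lemma eq_and_eq_or_eq_and_eq_of_mem_latticeCircle {n : ℕ} {m₁ m₂ m₃ m₄ : ℤ × ℤ}
    (h₁ : m₁ ∈ latticeCircle n) (h₂ : m₂ ∈ latticeCircle n) (h₃ : m₃ ∈ latticeCircle n)
    (h₄ : m₄ ∈ latticeCircle n) (hsum : m₁ + m₂ = m₃ + m₄) (hsum₀ : m₁ + m₂ ≠ 0) :
    m₃ = m₁ ∧ m₄ = m₂ ∨ m₃ = m₂ ∧ m₄ = m₁ := by
  let z : ℤ × ℤ →+ GaussianInt := AddMonoidHom.mk' (fun m => ⟨m.1, m.2⟩) fun _ _ => rfl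
  have hz : Function.Injective z := fun m m' h => by
    simpa [z, Prod.ext_iff, Zsqrtd.ext_iff] using h
  have hnorm : ∀ {m}, m ∈ latticeCircle n → z m * star (z m) = n := fun hm => by
    rw [← Zsqrtd.norm_eq_mul_conj, Zsqrtd.norm_def, ← Int.cast_natCast, ← mem_latticeCircle.mp hm]
    simp [z, sq]
  simpa only [hz.eq_iff] using eq_and_eq_or_eq_and_eq_of_add_eq_add_of_mul_star_self_eq
    (hnorm h₁) (hnorm h₂) (hnorm h₃) (hnorm h₄) (by rw [← map_add, hsum, map_add])
    (by rwa [← map_add, map_ne_zero_iff _ hz])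

lemma card_filter_add_eq_zero_of_neg_mem {G : Type*} [AddGroup G] [DecidableEq G]
    {S : Finset G} (hS : ∀ m ∈ S, -m ∈ S) : #{q ∈ S ×ˢ S | q.1 + q.2 = 0} = #S :=
  card_nbij' Prod.fst (fun m => (m, -m)) (fun _ hq => (mem_product.mp (mem_filter.mp hq).1).1)
    (fun m hm => mem_filter.mpr ⟨mem_product.mpr ⟨hm, hS m hm⟩, add_neg_cancel m⟩)
    (fun _ hq => Prod.ext rfl (eq_neg_of_add_eq_zero_right (mem_filter.mp hq).2).symm)
    (fun _ _ => rfl)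

lemma card_filter_add_eq_add_latticeCircle {n : ℕ} (hn : 0 < n) {m₁ m₂ : ℤ × ℤ}
    (h₁ : m₁ ∈ latticeCircle n) (h₂ : m₂ ∈ latticeCircle n) :
    (#{q ∈ latticeCircle n ×ˢ latticeCircle n | m₁ + m₂ = q.1 + q.2} : ℤ)
      = 2 - (if m₁ = m₂ then 1 else 0) + if m₂ = -m₁ then (#(latticeCircle n) : ℤ) - 2 else 0 := by
  by_cases h0 : m₁ + m₂ = 0
  · have hm₂ : m₂ = -m₁ := eq_neg_of_add_eq_zero_right h0
    have hne : m₁ ≠ -m₁ := by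
      intro h
      have : m₁ = 0 := by
        simp only [Prod.ext_iff, Prod.fst_neg, Prod.snd_neg, Prod.fst_zero, Prod.snd_zero] at h ⊢
        omega
      exact zero_notMem_latticeCircle hn (this ▸ h₁)
    rw [h0, filter_congr (fun q _ => eq_comm), card_filter_add_eq_zero_of_neg_mem
      (fun m hm => neg_mem_latticeCircle.mpr hm)]
    simp [hm₂, hne]
  · have hfiber : {q ∈ latticeCircle n ×ˢ latticeCircle n | m₁ + m₂ = q.1 + q.2}
        = {(m₁, m₂), (m₂, m₁)} := by
      ext ⟨m₃, m₄⟩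
      simp only [mem_filter, mem_product, mem_insert, mem_singleton, Prod.mk.injEq]
      constructor
      · rintro ⟨⟨h₃, h₄⟩, hsum⟩
        exact eq_and_eq_or_eq_and_eq_of_mem_latticeCircle h₁ h₂ h₃ h₄ hsum h0
      · rintro (⟨rfl, rfl⟩ | ⟨rfl, rfl⟩)
        exacts [⟨⟨h₁, h₂⟩, rfl⟩, ⟨⟨h₂, h₁⟩, add_comm _ _⟩]
    have hm₂ : m₂ ≠ -m₁ := fun h => h0 (h ▸ add_neg_cancel m₁)
    rw [hfiber, if_neg hm₂]
    by_cases h : m₁ = m₂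
    · simp [h]
    · rw [card_pair (by simp [h])]
      simp [h]

lemma addEnergy_latticeCircle {n : ℕ} (hn : 0 < n) :
    (E[latticeCircle n] : ℤ) = 3 * #(latticeCircle n) ^ 2 - 3 * #(latticeCircle n) := by
  have hfibers : E[latticeCircle n] = ∑ p ∈ latticeCircle n ×ˢ latticeCircle n,
      #{q ∈ latticeCircle n ×ˢ latticeCircle n | p.1 + p.2 = q.1 + q.2} := by
    rw [addEnergy_eq_card_filter, card_filter, sum_product]
    simp_rw [← card_filter]
  rw [hfibers, Nat.cast_sum, sum_product, sum_congr rfl fun m₁ h₁ => sum_congr rfl fun m₂ h₂ =>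
    card_filter_add_eq_add_latticeCircle hn h₁ h₂]
  simp only [sum_add_distrib, sum_sub_distrib, sum_const, Int.nsmul_eq_mul, sum_ite_eq,
    sum_ite_eq', neg_mem_latticeCircle, sum_ite_mem, inter_self, mul_one]
  ring

lemma two_sub_I_pow_ne_two_add_I_pow {d : ℕ} (hd : d ≠ 0) :
    (⟨2, -1⟩ : GaussianInt) ^ d ≠ ⟨2, 1⟩ ^ d := by
  -- Reduce modulo the prime `2 - i` of norm `5`, i.e. send `i` to `2` in `ZMod 5`.
  let φ : GaussianInt →+* ZMod 5 := Zsqrtd.lift ⟨2, by decide⟩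
  have h₁ : φ ⟨2, -1⟩ = 0 := by
    simp only [φ, Zsqrtd.lift_apply_apply]
    decide
  have h₂ : φ ⟨2, 1⟩ = 4 := by
    simp only [φ, Zsqrtd.lift_apply_apply]
    decide
  intro h
  have hφ := congrArg φ h
  rw [map_pow, map_pow, h₁, h₂, zero_pow hd] at hφ
  have h₄ : (4 : ZMod 5) ^ d * 4 ^ d = 1 := by
    rw [← mul_pow, show (4 : ZMod 5) * 4 = 1 by decide, one_pow]
  rw [← hφ, zero_mul] at h₄
  exact absurd h₄ (by decide)

lemma injOn_two_add_I_pow_mul_two_sub_I_pow (n : ℕ) :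
    Set.InjOn (fun ab : ℕ × ℕ => (⟨2, 1⟩ : GaussianInt) ^ ab.1 * ⟨2, -1⟩ ^ ab.2)
      (antidiagonal n) := by
  have key : ∀ {a b a' b' : ℕ}, a + b = a' + b' → a ≤ a' →
      (⟨2, 1⟩ : GaussianInt) ^ a * ⟨2, -1⟩ ^ b = ⟨2, 1⟩ ^ a' * ⟨2, -1⟩ ^ b' → a = a' := by
    intro a b a' b' hsum hle h
    obtain ⟨d, rfl⟩ := Nat.exists_eq_add_of_le hle
    obtain rfl : b = b' + d := by omega
    by_contra hd
    have hc : (⟨2, 1⟩ : GaussianInt) ^ a * ⟨2, -1⟩ ^ b' ≠ 0 :=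
      mul_ne_zero (pow_ne_zero _ (by decide)) (pow_ne_zero _ (by decide))
    exact two_sub_I_pow_ne_two_add_I_pow (d := d) (by omega)
      (mul_left_cancel₀ hc (by linear_combination h))
  rintro ⟨a, b⟩ hab ⟨a', b'⟩ hab' h
  rw [mem_coe, HasAntidiagonal.mem_antidiagonal] at hab hab'
  have hsum : a + b = a' + b' := hab.trans hab'.symm
  obtain rfl : a = a' :=
    (le_total a a').elim (key hsum · h) fun hle => (key hsum.symm hle h.symm).symm
  simp only [Prod.mk.injEq, true_and]
  omega

lemma le_card_latticeCircle_five_pow (n : ℕ) : n + 1 ≤ #(latticeCircle (5 ^ n)) := by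
  set z := fun ab : ℕ × ℕ => (⟨2, 1⟩ : GaussianInt) ^ ab.1 * ⟨2, -1⟩ ^ ab.2
  rw [← Nat.card_antidiagonal n]
  refine card_le_card_of_injOn (fun ab => ((z ab).re, (z ab).im)) (fun ab hab => ?_)
    (fun ab hab ab' hab' h => injOn_two_add_I_pow_mul_two_sub_I_pow n hab hab'
      (Zsqrtd.ext (congrArg Prod.fst h) (congrArg Prod.snd h)))
  rw [mem_coe, HasAntidiagonal.mem_antidiagonal] at hab
  have hnorm_pow (w : GaussianInt) (k : ℕ) : (w ^ k).norm = w.norm ^ k :=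
    map_pow Zsqrtd.normMonoidHom w k
  have hnorm : (z ab).norm = 5 ^ n := by
    rw [Zsqrtd.norm_mul, hnorm_pow, hnorm_pow, ← hab, pow_add]
    rfl
  rw [mem_coe, mem_latticeCircle, Nat.cast_pow, Nat.cast_ofNat, ← hnorm, Zsqrtd.norm_def]
  ring

lemma setIntegral_unitSquare_norm_pow_four_normalized_sum_torusChar (S : Finset (ℤ × ℤ)) :
    ∫ x in Set.Icc (0 : ℝ) 1 ×ˢ Set.Icc (0 : ℝ) 1,
      ‖∑ m ∈ S, (((√(#S : ℝ))⁻¹ : ℝ) : ℂ) * torusChar m x‖ ^ 4 = E[S] / #S ^ 2 := by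
  simp_rw [← mul_sum, norm_mul, mul_pow, norm_real, norm_inv, norm_of_nonneg (sqrt_nonneg _)]
  rw [integral_const_mul, setIntegral_unitSquare_norm_pow_four_sum_torusChar,
    show (4 : ℕ) = 2 * 2 from rfl, pow_mul, inv_pow, sq_sqrt (Nat.cast_nonneg _), inv_pow,
    inv_mul_eq_div]

lemma setIntegral_unitSquare_norm_pow_four_normalized_latticeCircle
    {n : ℕ} (hn : 0 < n) (hne : (latticeCircle n).Nonempty) :
    ∫ x in Set.Icc (0 : ℝ) 1 ×ˢ Set.Icc (0 : ℝ) 1,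
      ‖∑ m ∈ latticeCircle n, (((√(#(latticeCircle n) : ℝ))⁻¹ : ℝ) : ℂ) * torusChar m x‖ ^ 4
      = 3 - 3 / #(latticeCircle n) := by
  have hE := congrArg (Int.cast : ℤ → ℝ) (addEnergy_latticeCircle hn)
  push_cast at hE
  have hN : (#(latticeCircle n) : ℝ) ≠ 0 := by simpa using hne.ne_empty
  rw [setIntegral_unitSquare_norm_pow_four_normalized_sum_torusChar, hE]
  field_simp

theorem zygmund_constant_sharp :
    ∃ (lam : ℕ → ℕ) (S : ℕ → Finset (ℤ × ℤ)) (a : ℕ → (ℤ × ℤ) → ℂ),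
      (∀ n, 0 < lam n) ∧
      (∀ n, ∀ m : ℤ × ℤ, m ∈ S n ↔ m.1 ^ 2 + m.2 ^ 2 = (lam n : ℤ)) ∧
      (∀ n, ∑ m ∈ S n, ‖a n m‖ ^ 2 = 1) ∧
      Tendsto
        (fun n => ∫ x in Set.Icc (0 : ℝ) 1 ×ˢ Set.Icc (0 : ℝ) 1,
          ‖∑ m ∈ S n, a n m *
            Complex.exp (2 * (Real.pi : ℂ) * Complex.I *
              ((m.1 : ℂ) * (x.1 : ℂ) + (m.2 : ℂ) * (x.2 : ℂ)))‖ ^ 4)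
        atTop (nhds 3) := by
  have hne : ∀ n, (latticeCircle (5 ^ n)).Nonempty := fun n =>
    card_pos.mp (Nat.succ_pos n |>.trans_le (le_card_latticeCircle_five_pow n))
  have hN : ∀ n, (0 : ℝ) < #(latticeCircle (5 ^ n)) :=
    fun n => Nat.cast_pos.mpr (card_pos.mpr (hne n))
  refine ⟨fun n => 5 ^ n, fun n => latticeCircle (5 ^ n),
    fun n _ => (((√(#(latticeCircle (5 ^ n)) : ℝ))⁻¹ : ℝ) : ℂ), fun n => by positivity,
    fun n m => mem_latticeCircle, fun n => ?_, ?_⟩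
  · rw [sum_const, nsmul_eq_mul, norm_real, norm_inv, norm_of_nonneg (sqrt_nonneg _), inv_pow,
      sq_sqrt (hN n).le]
    exact mul_inv_cancel₀ (hN n).ne'
  · have hN_top : Tendsto (fun n => (#(latticeCircle (5 ^ n)) : ℝ)) atTop atTop :=
      tendsto_natCast_atTop_atTop.comp <| tendsto_atTop_mono
        (fun n => (Nat.le_succ n).trans (le_card_latticeCircle_five_pow n)) tendsto_id
    have h3 := (tendsto_const_nhds (x := (3 : ℝ))).sub
      ((tendsto_const_nhds (x := (3 : ℝ))).div_atTop hN_top)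
    rw [sub_zero] at h3
    exact h3.congr fun n =>
      (setIntegral_unitSquare_norm_pow_four_normalized_latticeCircle
        (by positivity) (hne n)).symm

end
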